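/- arXiv:2302.09780 — 4 statements merged into one kernel-verified Lean document; each statement's English description precedes it below -/
import Mathlib

section
/- Let F : A → {0,1}* be an injective map from a finite set A to binary strings. Then for any probability distribution p on A, the expected codeword length satisfies ∑_{a∈A} p(a)·len(F(a)) ≥ H(p) − log₂ log₂(|A|+2), where H(p) is the Shannon entropy of p in bits. -/
open Finset Real

lemma card_len_eq_le {A : Type*} [Fintype A] [DecidableEq A] (F : A → List Bool)
    (hF : Function.Injective F) (ℓ : ℕ) :
    (Finset.univ.filter fun a => (F a).length = ℓ).card ≤ 2 ^ ℓ := by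
  classical
  have hinj : Function.Injective
      (fun a : {x : A // (F x).length = ℓ} => (⟨F a.1, a.2⟩ : List.Vector Bool ℓ)) := by
    intro a b hab
    exact Subtype.ext (hF (congrArg Subtype.val hab))
  have h := Fintype.card_le_of_injective (β := List.Vector Bool ℓ) _ hinj
  rw [Fintype.card_subtype] at h
  simpa [card_vector] using h

lemma kraft_sum_le {A : Type*} [Fintype A] (F : A → List Bool)
    (hF : Function.Injective F) (k : ℕ) :
    ∑ a, ((2:ℝ) ^ (F a).length)⁻¹ ≤
      k + ((Fintype.card A : ℝ) + 1) / 2 ^ (k + 1) := by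
  classical
  set q : A → ℝ := fun a => ((2:ℝ) ^ (F a).length)⁻¹ with hq
  set c : ℝ := ((2:ℝ) ^ (k + 1))⁻¹ with hc
  set S : Finset A := Finset.univ.filter (fun a => (F a).length ≤ k) with hS
  have hcpos : 0 < c := by positivity
  -- the tail sum
  have htail : ∑ a ∈ Finset.univ.filter (fun a => ¬ (F a).length ≤ k), q a ≤
      ((Finset.univ.filter (fun a => ¬ (F a).length ≤ k)).card : ℝ) * c := by
    calc ∑ a ∈ Finset.univ.filter (fun a => ¬ (F a).length ≤ k), q a
        ≤ ∑ a ∈ Finset.univ.filter (fun a => ¬ (F a).length ≤ k), c := by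
          apply Finset.sum_le_sum
          intro a ha
          simp only [Finset.mem_filter, not_le] at ha
          rw [hq, hc]
          apply inv_anti₀ (by positivity)
          exact pow_le_pow_right₀ one_le_two ha.2
      _ = ((Finset.univ.filter (fun a => ¬ (F a).length ≤ k)).card : ℝ) * c := by
          rw [Finset.sum_const, nsmul_eq_mul]
  -- the head sum, shifted by c
  have hhead : ∑ a ∈ S, (q a - c) ≤ k + c := by
    have hmaps : ∀ a ∈ S, (F a).length ∈ Finset.range (k + 1) := by
      intro a ha
      simp only [hS, Finset.mem_filter] at ha
      simpa [Finset.mem_range, Nat.lt_succ_iff] using ha.2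
    rw [← Finset.sum_fiberwise_of_maps_to hmaps]
    have hbound : ∀ ℓ ∈ Finset.range (k + 1),
        ∑ a ∈ S.filter (fun a => (F a).length = ℓ), (q a - c) ≤
          (2:ℝ) ^ ℓ * (((2:ℝ) ^ ℓ)⁻¹ - c) := by
      intro ℓ hℓ
      have hval : ∀ a ∈ S.filter (fun a => (F a).length = ℓ), q a - c = ((2:ℝ)^ℓ)⁻¹ - c := by
        intro a ha
        simp only [Finset.mem_filter] at ha
        rw [hq]
        simp [ha.2]
      rw [Finset.sum_congr rfl hval, Finset.sum_const, nsmul_eq_mul]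
      apply mul_le_mul_of_nonneg_right
      · have hsub : S.filter (fun a => (F a).length = ℓ) ⊆
            Finset.univ.filter (fun a => (F a).length = ℓ) := by
          intro a ha
          simp only [Finset.mem_filter] at ha ⊢
          exact ⟨Finset.mem_univ _, ha.2⟩
        calc ((S.filter (fun a => (F a).length = ℓ)).card : ℝ)
            ≤ ((Finset.univ.filter (fun a => (F a).length = ℓ)).card : ℝ) := by
              exact_mod_cast Finset.card_le_card hsub
          _ ≤ (2:ℝ) ^ ℓ := by exact_mod_cast card_len_eq_le F hF ℓ
      · rw [sub_nonneg, hc]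
        apply inv_anti₀ (by positivity)
        apply pow_le_pow_right₀ one_le_two
        exact (Finset.mem_range.1 hℓ).le
    calc ∑ ℓ ∈ Finset.range (k+1), ∑ a ∈ S.filter (fun a => (F a).length = ℓ), (q a - c)
        ≤ ∑ ℓ ∈ Finset.range (k+1), (2:ℝ) ^ ℓ * (((2:ℝ) ^ ℓ)⁻¹ - c) :=
          Finset.sum_le_sum hbound
      _ = ∑ ℓ ∈ Finset.range (k+1), (1 - (2:ℝ) ^ ℓ * c) := by
          apply Finset.sum_congr rfl
          intro ℓ _
          field_simp
      _ = (k+1) - (2 ^ (k+1) - 1) * c := by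
          rw [Finset.sum_sub_distrib, Finset.sum_const, Finset.card_range, ← Finset.sum_mul,
            geom_sum_eq (by norm_num : (2:ℝ) ≠ 1)]
          ring
      _ = k + c := by
          rw [hc]
          field_simp
          ring
  -- combine
  have hsplit : ∑ a, q a = ∑ a ∈ S, q a + ∑ a ∈ Finset.univ.filter (fun a => ¬ (F a).length ≤ k), q a := by
    rw [hS, Finset.sum_filter_add_sum_filter_not]
  have hheadfull : ∑ a ∈ S, q a ≤ (k + c) + S.card * c := by
    have h2 : ∑ a ∈ S, q a = ∑ a ∈ S, (q a - c) + S.card * c := by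
      rw [Finset.sum_sub_distrib, Finset.sum_const, nsmul_eq_mul]; ring
    rw [h2]
    linarith [hhead]
  have hcards : (S.card : ℝ) + ((Finset.univ.filter (fun a => ¬ (F a).length ≤ k)).card : ℝ)
      = (Fintype.card A : ℝ) := by
    rw [hS]
    exact_mod_cast congrArg Nat.cast
      ((Finset.card_filter_add_card_filter_not (s := Finset.univ)
        (p := fun a => (F a).length ≤ k)).trans Finset.card_univ)
  have hfinal : (↑(Fintype.card A) + 1) / 2 ^ (k + 1) = ((Fintype.card A : ℝ) + 1) * c := by
    rw [hc]; ring
  rw [hfinal, hsplit]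
  nlinarith [hheadfull, htail, hcards, hcpos.le]

lemma gibbs {A : Type*} [Fintype A] (p q : A → ℝ) (hp0 : ∀ a, 0 ≤ p a)
    (hp1 : ∑ a, p a = 1) (hq : ∀ a, 0 < q a) :
    ∑ a, p a * Real.log (q a) ≤ ∑ a, p a * Real.log (p a) + Real.log (∑ a, q a) := by
  classical
  set Z : ℝ := ∑ a, q a with hZdef
  have hZ : 0 < Z := Finset.sum_pos' (fun a _ => (hq a).le) (by
    have : Nonempty A := by
      by_contra h
      rw [not_nonempty_iff] at h
      simp [Finset.univ_eq_empty] at hp1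
    exact ⟨Classical.arbitrary A, Finset.mem_univ _, hq _⟩)
  have key : ∀ a, p a * Real.log (q a) - p a * Real.log (p a) - p a * Real.log Z ≤
      q a / Z - p a := by
    intro a
    rcases eq_or_lt_of_le (hp0 a) with h0 | hpa
    · rw [← h0]
      simp only [zero_mul, sub_zero, zero_sub, neg_zero, sub_zero]
      have := div_nonneg (hq a).le hZ.le
      linarith
    · have hx : (0:ℝ) < q a / (p a * Z) := div_pos (hq a) (mul_pos hpa hZ)
      have hlog := Real.log_le_sub_one_of_pos hx
      have hexp : Real.log (q a / (p a * Z)) =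
          Real.log (q a) - Real.log (p a) - Real.log Z := by
        rw [Real.log_div (hq a).ne' (mul_pos hpa hZ).ne', Real.log_mul hpa.ne' hZ.ne']
        ring
      have := mul_le_mul_of_nonneg_left hlog (hp0 a)
      rw [hexp] at this
      have hval : p a * (q a / (p a * Z) - 1) = q a / Z - p a := by
        field_simp
      rw [hval] at this
      linarith [this]
  have hsum : ∑ a, (p a * Real.log (q a) - p a * Real.log (p a) - p a * Real.log Z) ≤
      ∑ a, (q a / Z - p a) := Finset.sum_le_sum (fun a _ => key a)
  rw [Finset.sum_sub_distrib, Finset.sum_sub_distrib, Finset.sum_sub_distrib,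
    ← Finset.sum_div, ← Finset.sum_mul] at hsum
  rw [hp1, one_mul, ← hZdef, div_self hZ.ne'] at hsum
  linarith [hsum]

lemma logb_chord {t : ℝ} (h1 : 1 ≤ t) (h2 : t ≤ 2) : t - 1 ≤ Real.logb 2 t := by
  have hcc := strictConcaveOn_log_Ioi.concaveOn.2 (Set.mem_Ioi.2 one_pos)
    (Set.mem_Ioi.2 two_pos) (show (0:ℝ) ≤ 2 - t by linarith)
    (show (0:ℝ) ≤ t - 1 by linarith) (show (2 - t) + (t - 1) = 1 by ring)
  simp only [smul_eq_mul, Real.log_one, mul_zero, mul_one, zero_add] at hcc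
  have ht : 2 - t + (t - 1) * 2 = t := by ring
  rw [ht] at hcc
  rw [Real.logb, le_div_iff₀ (Real.log_pos one_lt_two)]
  linarith [hcc]

/-- Any injective binary code `F` on a finite set `A` has expected length at
least the Shannon entropy (in bits) minus `log₂ log₂ (|A| + 2)`. -/
theorem injective_code_expected_length {A : Type*} [Fintype A]
    (F : A → List Bool) (hF : Function.Injective F)
    (p : A → ℝ) (hp0 : ∀ a, 0 ≤ p a) (hp1 : ∑ a, p a = 1) :
    ∑ a, p a * ((F a).length : ℝ) ≥
      (-∑ a, p a * Real.logb 2 (p a)) -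
        Real.logb 2 (Real.logb 2 ((Fintype.card A : ℝ) + 2)) := by
  classical
  have hne : Nonempty A := by
    by_contra h
    rw [not_nonempty_iff] at h
    simp [Finset.univ_eq_empty] at hp1
  have hn1 : 1 ≤ Fintype.card A := Fintype.card_pos
  set q : A → ℝ := fun a => ((2:ℝ) ^ (F a).length)⁻¹ with hqdef
  have hqpos : ∀ a, 0 < q a := fun a => by rw [hqdef]; positivity
  set Z : ℝ := ∑ a, q a with hZdef
  have hZpos : 0 < Z := Finset.sum_pos (fun a _ => hqpos a) Finset.univ_nonempty
  set m : ℕ := Nat.log 2 (Fintype.card A + 1) with hm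
  have hm1 : 1 ≤ m := Nat.log_pos one_lt_two (by omega)
  have hlow : (2:ℕ) ^ m ≤ Fintype.card A + 1 := Nat.pow_log_le_self 2 (by omega)
  have hhigh : Fintype.card A + 1 < 2 ^ (m + 1) :=
    Nat.lt_pow_succ_log_self one_lt_two (Fintype.card A + 1)
  -- the Kraft-type bound
  have hk : Z ≤ ((m:ℝ) - 1) + ((Fintype.card A : ℝ) + 1) / 2 ^ m := by
    have hk0 := kraft_sum_le F hF (m - 1)
    have e1 : m - 1 + 1 = m := by omega
    rw [e1] at hk0
    rw [hZdef, hqdef]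
    calc ∑ a, ((2:ℝ) ^ (F a).length)⁻¹
        ≤ ((m - 1 : ℕ) : ℝ) + ((Fintype.card A : ℝ) + 1) / 2 ^ m := hk0
      _ = ((m:ℝ) - 1) + ((Fintype.card A : ℝ) + 1) / 2 ^ m := by
          rw [Nat.cast_sub hm1]; norm_num
  -- Z ≤ logb 2 (card + 2)
  have h2m : (0:ℝ) < 2 ^ m := by positivity
  set t : ℝ := ((Fintype.card A : ℝ) + 1) / 2 ^ m with htdef
  have ht1 : 1 ≤ t := by
    rw [htdef, le_div_iff₀ h2m, one_mul]
    exact_mod_cast hlow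
  have ht2 : t ≤ 2 := by
    rw [htdef, div_le_iff₀ h2m]
    have : ((Fintype.card A : ℝ) + 1) ≤ 2 ^ (m + 1) := by exact_mod_cast hhigh.le
    calc ((Fintype.card A : ℝ) + 1) ≤ 2 ^ (m+1) := this
      _ = 2 * 2 ^ m := by ring
  have hZlog : Z ≤ Real.logb 2 ((Fintype.card A : ℝ) + 2) := by
    have hchord := logb_chord ht1 ht2
    have hlogn1 : Real.logb 2 ((Fintype.card A : ℝ) + 1) = m + Real.logb 2 t := by
      have hprod : ((Fintype.card A : ℝ) + 1) = 2 ^ m * t := by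
        rw [htdef]; field_simp
      rw [hprod, Real.logb_mul (by positivity) (by positivity),
        Real.logb_pow, Real.logb_self_eq_one one_lt_two]
      ring
    have hmono : Real.logb 2 ((Fintype.card A : ℝ) + 1) ≤
        Real.logb 2 ((Fintype.card A : ℝ) + 2) :=
      Real.logb_le_logb_of_le one_lt_two (by positivity) (by linarith)
    calc Z ≤ ((m:ℝ) - 1) + t := hk
      _ ≤ (m:ℝ) + Real.logb 2 t := by linarith [hchord]
      _ = Real.logb 2 ((Fintype.card A : ℝ) + 1) := hlogn1.symm
      _ ≤ Real.logb 2 ((Fintype.card A : ℝ) + 2) := hmono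
  -- Gibbs
  have hg := gibbs p q hp0 hp1 hqpos
  have hsum1 : ∑ a, p a * Real.log (q a) =
      -(Real.log 2) * ∑ a, p a * ((F a).length : ℝ) := by
    rw [Finset.mul_sum]
    apply Finset.sum_congr rfl
    intro a _
    rw [hqdef]
    simp only [Real.log_inv, Real.log_pow]
    ring
  rw [hsum1, ← hZdef] at hg
  have hlog2 : (0:ℝ) < Real.log 2 := Real.log_pos one_lt_two
  have hlogbZ : Real.logb 2 Z ≤ Real.logb 2 (Real.logb 2 ((Fintype.card A : ℝ) + 2)) :=
    Real.logb_le_logb_of_le one_lt_two hZpos hZlog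
  have hconv1 : ∑ a, p a * Real.logb 2 (p a) = (∑ a, p a * Real.log (p a)) / Real.log 2 := by
    rw [Finset.sum_div]
    apply Finset.sum_congr rfl
    intro a _
    rw [Real.logb]
    ring
  have hconvZ : Real.logb 2 Z = Real.log Z / Real.log 2 := rfl
  rw [ge_iff_le, sub_le_iff_le_add, hconv1]
  have hlbZ : Real.log Z / Real.log 2 ≤ Real.logb 2 (Real.logb 2 ((Fintype.card A : ℝ) + 2)) := by
    rw [← hconvZ]; exact hlogbZ
  rw [← neg_div, div_le_iff₀ hlog2]
  have hmul := mul_le_mul_of_nonneg_right hlbZ hlog2.le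
  have he : Real.log Z / Real.log 2 * Real.log 2 = Real.log Z :=
    div_mul_cancel₀ _ hlog2.ne'
  rw [he] at hmul
  nlinarith [hg, hmul]
end

section
/- Let X be a real random variable with E[X] = 0 and X ≤ x₀ almost surely for some x₀ > 0. Then E[exp(X)] ≤ 1 + c(x₀)·E[X²], where c(x₀) = (e^{x₀} − 1 − x₀)/x₀². -/
open MeasureTheory Real Nat

lemma exp_tail_eq (x : ℝ) : ∑' n : ℕ, x ^ (n + 2) / (n + 2)! = Real.exp x - 1 - x := by
  have hs : Summable (fun n : ℕ => x ^ n / n !) := Real.summable_pow_div_factorial x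
  have h := Summable.sum_add_tsum_nat_add (f := fun n : ℕ => x ^ n / n !) 2 hs
  have hexp : Real.exp x = ∑' n : ℕ, x ^ n / n ! := by
    rw [Real.exp_eq_exp_ℝ, NormedSpace.exp_eq_tsum_div]
  simp [Finset.sum_range_succ] at h
  rw [hexp]
  linarith [h]

lemma tail_mono {x x₀ : ℝ} (hx : 0 ≤ x) (hxx₀ : x ≤ x₀) (hx₀ : 0 < x₀) :
    Real.exp x - 1 - x ≤ x ^ 2 / x₀ ^ 2 * (Real.exp x₀ - 1 - x₀) := by
  rw [← exp_tail_eq x, ← exp_tail_eq x₀, ← tsum_mul_left]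
  have hs : Summable (fun n : ℕ => x ^ (n + 2) / (n + 2)!) :=
    (summable_nat_add_iff 2).mpr (Real.summable_pow_div_factorial x)
  have hs₀ : Summable (fun n : ℕ => x ^ 2 / x₀ ^ 2 * (x₀ ^ (n + 2) / (n + 2)!)) :=
    ((summable_nat_add_iff 2).mpr (Real.summable_pow_div_factorial x₀)).mul_left _
  refine Summable.tsum_le_tsum (fun n => ?_) hs hs₀
  have hpow : x ^ n ≤ x₀ ^ n := pow_le_pow_left₀ hx hxx₀ n
  have h2 : x ^ (n + 2) = x ^ 2 * x ^ n := by ring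
  have h3 : x ^ 2 / x₀ ^ 2 * (x₀ ^ (n + 2) / (n + 2)!) = x ^ 2 * x₀ ^ n / (n + 2)! := by
    field_simp
    ring
  rw [h2, h3]
  gcongr

lemma exp_le_quadratic_of_nonpos {x : ℝ} (hx : x ≤ 0) :
    Real.exp x ≤ 1 + x + x ^ 2 / 2 := by
  have hd : ∀ y : ℝ, HasDerivAt (fun y : ℝ => Real.exp y - (1 + y + y ^ 2 / 2))
      (Real.exp y - (1 + y)) y := by
    intro y
    have h1 : HasDerivAt (fun y : ℝ => 1 + y + y ^ 2 / 2) (0 + 1 + 2 * y ^ 1 / 2) y :=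
      (((hasDerivAt_const y (1:ℝ)).add (hasDerivAt_id y)).add
        ((hasDerivAt_pow 2 y).div_const 2))
    have h2 : HasDerivAt (fun y : ℝ => Real.exp y - (1 + y + y ^ 2 / 2))
        (Real.exp y - (0 + 1 + 2 * y ^ 1 / 2)) y := (Real.hasDerivAt_exp y).sub h1
    convert h2 using 1
    ring
  have hmono : Monotone (fun y : ℝ => Real.exp y - (1 + y + y ^ 2 / 2)) := by
    apply monotone_of_deriv_nonneg
    · exact fun y => (hd y).differentiableAt
    · intro y
      rw [(hd y).deriv]
      have := Real.add_one_le_exp y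
      linarith
  have h := hmono hx
  simp at h
  linarith [h]

lemma key_pointwise {x x₀ : ℝ} (hx₀ : 0 < x₀) (hx : x ≤ x₀) :
    Real.exp x ≤ 1 + x + (Real.exp x₀ - 1 - x₀) / x₀ ^ 2 * x ^ 2 := by
  set c := (Real.exp x₀ - 1 - x₀) / x₀ ^ 2 with hc
  have hchalf : 1 / 2 ≤ c := by
    have := Real.quadratic_le_exp_of_nonneg hx₀.le
    rw [hc, le_div_iff₀ (by positivity)]
    nlinarith
  rcases le_or_gt x 0 with h0 | h0
  · have := exp_le_quadratic_of_nonpos h0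
    nlinarith [sq_nonneg x]
  · have h := tail_mono h0.le hx hx₀
    have h2 : Real.exp x - 1 - x ≤ c * x ^ 2 := by
      rw [hc]
      calc Real.exp x - 1 - x ≤ x ^ 2 / x₀ ^ 2 * (Real.exp x₀ - 1 - x₀) := h
        _ = (Real.exp x₀ - 1 - x₀) / x₀ ^ 2 * x ^ 2 := by ring
    linarith

/-- If `X` is a centered random variable bounded above by `x₀ > 0` a.s., then
`E[exp X] ≤ 1 + c(x₀) E[X²]` with `c(x₀) = (e^{x₀} - 1 - x₀)/x₀²`. -/
theorem exp_moment_le_of_centered_bounded {Ω : Type*} [MeasurableSpace Ω]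
    (μ : Measure Ω) [IsProbabilityMeasure μ]
    (X : Ω → ℝ) (x₀ : ℝ) (hx₀ : 0 < x₀)
    (hInt : Integrable X μ)
    (hInt2 : Integrable (fun ω => (X ω) ^ 2) μ)
    (hmean : ∫ ω, X ω ∂μ = 0)
    (hbd : ∀ᵐ ω ∂μ, X ω ≤ x₀) :
    ∫ ω, Real.exp (X ω) ∂μ ≤
      1 + ((Real.exp x₀ - 1 - x₀) / x₀ ^ 2) * ∫ ω, (X ω) ^ 2 ∂μ := by
  set c := (Real.exp x₀ - 1 - x₀) / x₀ ^ 2 with hc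
  have hInt1 : Integrable (fun ω => 1 + X ω) μ := (integrable_const 1).add hInt
  have hIntRHS : Integrable (fun ω => 1 + X ω + c * (X ω) ^ 2) μ :=
    hInt1.add (hInt2.const_mul c)
  have hae : ∀ᵐ ω ∂μ, Real.exp (X ω) ≤ 1 + X ω + c * (X ω) ^ 2 := by
    filter_upwards [hbd] with ω hω
    exact key_pointwise hx₀ hω
  have hmeas : AEStronglyMeasurable (fun ω => Real.exp (X ω)) μ :=
    (Real.continuous_exp.comp_aestronglyMeasurable hInt.aestronglyMeasurable)
  have hIntExp : Integrable (fun ω => Real.exp (X ω)) μ := by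
    refine hIntRHS.mono' hmeas ?_
    filter_upwards [hae] with ω hω
    rw [Real.norm_eq_abs, abs_of_pos (Real.exp_pos _)]
    exact hω
  calc ∫ ω, Real.exp (X ω) ∂μ ≤ ∫ ω, (1 + X ω + c * (X ω) ^ 2) ∂μ :=
        integral_mono_ae hIntExp hIntRHS hae
    _ = 1 + c * ∫ ω, (X ω) ^ 2 ∂μ := by
        rw [integral_add hInt1 (hInt2.const_mul c),
          integral_add (integrable_const 1) hInt, integral_const,
          integral_const_mul, hmean]
        simp
end

section
/- Let (Z_i)_{i≥1} be independent random variables taking values in a finite alphabet X, with Z_i distributed according to q_i, and suppose max_{x∈X} q_i(x) ≤ 1 − c for all i, for some c > 0. Then for any t ≥ 1 and ℓ ≥ 1, P(Z_1^ℓ = Z_{t+1}^{t+ℓ}) ≤ (1−c)^ℓ, where Z_a^b denotes the substring (Z_a, …, Z_b). -/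
open MeasureTheory ProbabilityTheory

/-- For independent `X`-valued random variables `Z_i ∼ q_i` with all point
probabilities at most `1 - c`, the probability that the block `(Z_1,…,Z_ℓ)` equals the
block `(Z_{t+1},…,Z_{t+ℓ})` is at most `(1-c)^ℓ`. -/
theorem block_match_prob_le {Ω : Type*} [MeasurableSpace Ω]
    (μ : Measure Ω) [IsProbabilityMeasure μ]
    {𝒳 : Type*} [Fintype 𝒳] [MeasurableSpace 𝒳] [MeasurableSingletonClass 𝒳]
    (Z : ℕ → Ω → 𝒳) (hmeas : ∀ i, Measurable (Z i))
    (hindep : iIndepFun Z μ)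
    (q : ℕ → 𝒳 → ℝ) (c : ℝ) (hc : 0 < c)
    (hlaw : ∀ i x, μ {ω | Z i ω = x} = ENNReal.ofReal (q i x))
    (hbd : ∀ i x, q i x ≤ 1 - c)
    (t ℓ : ℕ) (ht : 1 ≤ t) (hℓ : 1 ≤ ℓ) :
    μ {ω | ∀ i ∈ Finset.range ℓ, Z (1 + i) ω = Z (t + 1 + i) ω}
      ≤ ENNReal.ofReal ((1 - c) ^ ℓ) := by
  classical
  -- 1 - c is nonnegative
  have h1c : 0 ≤ 1 - c := by
    by_contra h
    push_neg at h
    have hz : ∀ x : 𝒳, μ {ω | Z 0 ω = x} = 0 := fun x => by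
      rw [hlaw]
      exact ENNReal.ofReal_eq_zero.2 ((hbd 0 x).trans h.le)
    have huniv : (Set.univ : Set Ω) = ⋃ x : 𝒳, {ω | Z 0 ω = x} := by
      ext ω; simp
    have hle := measure_iUnion_le (μ := μ) (fun x : 𝒳 => {ω | Z 0 ω = x})
    rw [← huniv, measure_univ] at hle
    simp [hz] at hle
  set r : ENNReal := ENNReal.ofReal (1 - c) with hr
  set E : ℕ → Set Ω := fun m => {ω | ∀ i ∈ Finset.range m, Z (1 + i) ω = Z (t + 1 + i) ω}
    with hEdef
  have hsingle : ∀ (j : ℕ) (x : 𝒳), MeasurableSet {ω | Z j ω = x} := fun j x =>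
    hmeas j (measurableSet_singleton x)
  have hEmeas : ∀ m, MeasurableSet (E m) := by
    intro m
    have hEq : E m = ⋂ i ∈ (Finset.range m : Finset ℕ),
        {ω | Z (1 + i) ω = Z (t + 1 + i) ω} := by
      ext ω; simp [hEdef]
    rw [hEq]
    exact MeasurableSet.biInter ((Finset.range m : Finset ℕ) : Set ℕ).to_countable
      (fun i _ => measurableSet_eq_fun (hmeas _) (hmeas _))
  -- key single-step bound
  have key : ∀ m, μ (E (m + 1)) ≤ r * μ (E m) := by
    intro m
    have hidx : t + 1 + m = t + m + 1 := by omega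
    set S : Finset ℕ := Finset.range (t + m + 1) with hS
    set T : Finset ℕ := ({t + m + 1} : Finset ℕ) with hT
    have hST : Disjoint S T := by
      simp [hS, hT, Finset.disjoint_singleton_right]
    have hIndep := hindep.indepFun_finset S T hST hmeas
    set f : Ω → (↥S → 𝒳) := fun ω (i : S) => Z i ω with hf
    set g : Ω → (↥T → 𝒳) := fun ω (i : T) => Z i ω with hg
    set F : 𝒳 → Set Ω := fun x => E m ∩ {ω | Z (1 + m) ω = x} with hF
    set G : 𝒳 → Set Ω := fun x => {ω | Z (t + 1 + m) ω = x} with hG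
    have hFmeas : ∀ x, MeasurableSet (F x) := fun x => (hEmeas m).inter (hsingle _ x)
    have hGmeas : ∀ x, MeasurableSet (G x) := fun x => hsingle _ x
    have hAllS : ∀ (A : Set (↥S → 𝒳)), MeasurableSet A := fun A =>
      (Set.to_countable A).measurableSet
    have hAllT : ∀ (A : Set (↥T → 𝒳)), MeasurableSet A := fun A =>
      (Set.to_countable A).measurableSet
    -- F x is f-measurable
    have hFpre : ∀ x, F x = f ⁻¹' (f '' F x) := by
      intro x
      apply Set.Subset.antisymm (Set.subset_preimage_image f (F x))
      rintro ω ⟨ω', hω', hfe⟩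
      have hzz : ∀ j, j ∈ S → Z j ω' = Z j ω := fun j hj => congrFun hfe ⟨j, hj⟩
      constructor
      · intro i hi
        have hi' : i < m := Finset.mem_range.1 hi
        have h1 : (1 + i) ∈ S := by simp [hS]; omega
        have h2 : (t + 1 + i) ∈ S := by simp [hS]; omega
        rw [← hzz _ h1, ← hzz _ h2]
        exact hω'.1 i hi
      · have h3 : (1 + m) ∈ S := by simp [hS]; omega
        show Z (1 + m) ω = x
        rw [← hzz _ h3]
        exact hω'.2
    have hTm : t + m + 1 ∈ T := by simp [hT]
    have hGpre : ∀ x, G x = g ⁻¹' {h : ↥T → 𝒳 | h ⟨t + m + 1, hTm⟩ = x} := by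
      intro x
      ext ω
      show Z (t + 1 + m) ω = x ↔ Z (t + m + 1) ω = x
      rw [hidx]
    have hmul : ∀ x, μ (F x ∩ G x) = μ (F x) * μ (G x) := by
      intro x
      conv_lhs => rw [hFpre x, hGpre x]
      rw [hIndep.measure_inter_preimage_eq_mul _ _ (hAllS _) (hAllT _)]
      rw [← hFpre x, ← hGpre x]
    have hGbd : ∀ x, μ (G x) ≤ r := fun x => by
      rw [hG]
      simp only []
      rw [hlaw]
      exact ENNReal.ofReal_le_ofReal (hbd _ x)
    -- decomposition of E (m+1)
    have hdecomp : E (m + 1) = ⋃ x : 𝒳, F x ∩ G x := by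
      ext ω
      constructor
      · intro hω
        have hω' : ∀ i ∈ Finset.range (m + 1), Z (1 + i) ω = Z (t + 1 + i) ω := hω
        refine Set.mem_iUnion.2 ⟨Z (t + 1 + m) ω, ⟨⟨?_, ?_⟩, rfl⟩⟩
        · intro i hi
          exact hω' i (Finset.mem_range.2 (Nat.lt_succ_of_lt (Finset.mem_range.1 hi)))
        · exact hω' m (Finset.mem_range.2 (Nat.lt_succ_self m))
      · intro hω
        obtain ⟨x, ⟨⟨h1, h2⟩, h3⟩⟩ := Set.mem_iUnion.1 hω
        intro i hi
        rcases Nat.lt_succ_iff_lt_or_eq.1 (Finset.mem_range.1 hi) with hlt | heq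
        · exact h1 i (Finset.mem_range.2 hlt)
        · subst heq
          show Z (1 + i) ω = Z (t + 1 + i) ω
          rw [show Z (1 + i) ω = x from h2, show Z (t + 1 + i) ω = x from h3]
    have hdisj : Pairwise (Function.onFun Disjoint (fun x => F x ∩ G x)) := by
      intro x y hxy
      rw [Function.onFun, Set.disjoint_left]
      rintro ω ⟨_, hx⟩ ⟨_, hy⟩
      exact hxy (by rw [← show Z (t + 1 + m) ω = x from hx, show Z (t + 1 + m) ω = y from hy])
    have hdisj' : Pairwise (Function.onFun Disjoint F) := by
      intro x y hxy
      rw [Function.onFun, Set.disjoint_left]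
      rintro ω ⟨_, hx⟩ ⟨_, hy⟩
      exact hxy (by rw [← show Z (1 + m) ω = x from hx, show Z (1 + m) ω = y from hy])
    have hEm : E m = ⋃ x : 𝒳, F x := by
      ext ω
      simp [hF, Set.mem_iUnion]
    calc μ (E (m + 1)) = ∑' x : 𝒳, μ (F x ∩ G x) := by
          rw [hdecomp, measure_iUnion hdisj (fun x => (hFmeas x).inter (hGmeas x))]
      _ = ∑' x : 𝒳, μ (F x) * μ (G x) := by
          exact tsum_congr hmul
      _ ≤ ∑' x : 𝒳, μ (F x) * r := by
          exact ENNReal.tsum_le_tsum fun x => mul_le_mul_right (hGbd x) _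
      _ = (∑' x : 𝒳, μ (F x)) * r := ENNReal.tsum_mul_right
      _ = μ (E m) * r := by rw [hEm, measure_iUnion hdisj' hFmeas]
      _ = r * μ (E m) := mul_comm _ _
  have main : ∀ m, μ (E m) ≤ r ^ m := by
    intro m
    induction m with
    | zero =>
        have : E 0 = Set.univ := by ext ω; simp [hEdef]
        rw [this, measure_univ, pow_zero]
    | succ n ih =>
        calc μ (E (n + 1)) ≤ r * μ (E n) := key n
          _ ≤ r * r ^ n := mul_le_mul_right ih _
          _ = r ^ (n + 1) := (pow_succ' r n).symm
  have := main ℓ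
  rwa [hr, ← ENNReal.ofReal_pow h1c] at this
end

section
/- Let p be a probability distribution on a finite alphabet X and define ψ(λ) := λ·H(p) + (1−λ)·log(∑_{x∈X} p(x)^{1/(1−λ)}) for λ ∈ [0,1), where H(p) is the entropy in nats. Then ψ(λ) ≤ log(1 + c*λ²) for all λ ∈ [0, 1/2], where c* depends only on ∑_x p(x)(log p(x))² and max_x p(x) ≤ 1 − c. In particular ψ(0) = 0 and ψ'(0) = 0. -/
open Finset

/-- Shannon entropy (in nats) of a probability vector on a finite type. -/
noncomputable def Hnat {α : Type*} [Fintype α] (p : α → ℝ) : ℝ :=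
  -∑ a, p a * Real.log (p a)

/-- `ψ(λ) = λ H(p) + (1−λ) log ∑_x p(x)^{1/(1−λ)}`. -/
noncomputable def psiFn {𝒳 : Type*} [Fintype 𝒳] (p : 𝒳 → ℝ) (l : ℝ) : ℝ :=
  l * Hnat p + (1 - l) * Real.log (∑ x, p x ^ ((1 : ℝ) / (1 - l)))

/-- For `z ≤ 0`, `exp z ≤ 1 + z + z²/2`. -/
lemma exp_le_one_add_add_sq {z : ℝ} (hz : z ≤ 0) : Real.exp z ≤ 1 + z + z ^ 2 / 2 := by
  have key : ∀ x : ℝ, HasDerivAt (fun y => Real.exp y - 1 - y - y ^ 2 / 2)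
      (Real.exp x - 1 - x) x := by
    intro x
    have h1 : HasDerivAt (fun y : ℝ => Real.exp y - 1 - y - y ^ 2 / 2)
        (Real.exp x - 0 - 1 - (↑2 * x ^ 1) / 2) x :=
      (((Real.hasDerivAt_exp x).sub (hasDerivAt_const x 1)).sub (hasDerivAt_id x)).sub
        ((hasDerivAt_pow 2 x).div_const 2)
    convert h1 using 1
    push_cast
    ring
  have mono : Monotone (fun y => Real.exp y - 1 - y - y ^ 2 / 2) := by
    apply monotone_of_deriv_nonneg (fun x => (key x).differentiableAt)
    intro x
    rw [(key x).deriv]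
    nlinarith [Real.add_one_le_exp x]
  have := mono hz
  simp only [Real.exp_zero] at this
  nlinarith

/-- The derivative in the exponent of `s ↦ p^s` at `s = 1`, for `p ≥ 0`. -/
lemma hasDerivAt_rpow_exponent {p : ℝ} (hp : 0 ≤ p) :
    HasDerivAt (fun s : ℝ => p ^ s) (p * Real.log p) 1 := by
  rcases eq_or_lt_of_le hp with h | h
  · have hev : (fun s : ℝ => p ^ s) =ᶠ[nhds (1 : ℝ)] fun _ => (0 : ℝ) := by
      filter_upwards [eventually_ne_nhds (one_ne_zero : (1:ℝ) ≠ 0)] with s hs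
      rw [← h, Real.zero_rpow hs]
    have : HasDerivAt (fun _ : ℝ => (0 : ℝ)) 0 1 := hasDerivAt_const 1 0
    have := this.congr_of_eventuallyEq hev
    simpa [← h] using this
  · have := (Real.hasStrictDerivAt_const_rpow h (1 : ℝ)).hasDerivAt
    simpa [Real.rpow_one] using this

/-- Chord bound: `exp(2Cl²) ≤ 1 + 4(e^{C/2}-1) l²` for `l ∈ [0,1/2]`, in log form. -/
lemma two_C_sq_le_log {C l : ℝ} (hC : 0 < C) (hl0 : 0 ≤ l) (hl2 : l ≤ 1 / 2) :
    2 * C * l ^ 2 ≤ Real.log (1 + 4 * (Real.exp (C / 2) - 1) * l ^ 2) := by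
  have hs' : (-1:ℝ) ≤ Real.exp (C/2) - 1 := by linarith [Real.exp_pos (C/2)]
  have hb := rpow_one_add_le_one_add_mul_self hs' (p := 4 * l ^ 2)
    (by positivity) (by nlinarith)
  rw [show (1:ℝ) + (Real.exp (C/2) - 1) = Real.exp (C/2) by ring, ← Real.exp_mul,
    show C / 2 * (4 * l ^ 2) = 2 * C * l ^ 2 by ring] at hb
  have hb' : Real.exp (2 * C * l ^ 2) ≤ 1 + 4 * (Real.exp (C / 2) - 1) * l ^ 2 := by
    calc Real.exp (2 * C * l ^ 2) ≤ 1 + 4 * l ^ 2 * (Real.exp (C/2) - 1) := hb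
      _ = 1 + 4 * (Real.exp (C / 2) - 1) * l ^ 2 := by ring
  have hpos : 0 < 1 + 4 * (Real.exp (C / 2) - 1) * l ^ 2 :=
    lt_of_lt_of_le (Real.exp_pos _) hb'
  exact (Real.le_log_iff_exp_le hpos).2 hb'

set_option maxHeartbeats 1000000 in
/-- For a distribution `p` with `max_x p(x) ≤ 1 − c` and bounded second
log-moment `C`, there is a constant `c*` (depending only on `c` and `C`) with
`ψ(λ) ≤ log(1 + c* λ²)` for `λ ∈ [0, 1/2]`; moreover `ψ(0) = 0` and `ψ'(0) = 0`. -/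
theorem psi_quadratic_bound {𝒳 : Type*} [Fintype 𝒳] (c C : ℝ) (hc : 0 < c) (hC : 0 < C) :
    ∃ cstar > 0, ∀ p : 𝒳 → ℝ,
      (∀ x, 0 ≤ p x) → (∑ x, p x = 1) →
      (∀ x, p x ≤ 1 - c) → (∑ x, p x * (Real.log (p x)) ^ 2 ≤ C) →
      (∀ l ∈ Set.Icc (0 : ℝ) (1 / 2), psiFn p l ≤ Real.log (1 + cstar * l ^ 2)) ∧
      psiFn p 0 = 0 ∧ HasDerivAt (psiFn p) 0 0 := by
  have hexp : (1 : ℝ) < Real.exp (C / 2) := by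
    nlinarith [Real.add_one_le_exp (C / 2)]
  refine ⟨4 * (Real.exp (C / 2) - 1), by linarith, ?_⟩
  intro p hp0 hp1 hpc hpC
  set L : ℝ := ∑ x, p x * Real.log (p x) with hL
  have hHL : Hnat p = -L := by simp [Hnat, hL]
  have hF1 : (∑ x, p x ^ ((1 : ℝ))) = 1 := by
    simpa [Real.rpow_one] using hp1
  have hpsi0 : psiFn p 0 = 0 := by
    simp only [psiFn]
    rw [show (1:ℝ)/(1-(0:ℝ)) = 1 by norm_num, hF1, Real.log_one]
    ring
  refine ⟨?_, hpsi0, ?_⟩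
  · -- the quadratic bound
    intro l hl
    obtain ⟨hl0, hl2⟩ := hl
    have h1l : (0 : ℝ) < 1 - l := by linarith
    set t : ℝ := l / (1 - l) with ht
    have ht0 : 0 ≤ t := div_nonneg hl0 h1l.le
    have hst : (1 : ℝ) / (1 - l) = 1 + t := by rw [ht]; field_simp; ring
    have htl : (1 - l) * t = l := by rw [ht]; field_simp
    have ht2 : t ≤ 2 * l := by
      rw [ht, div_le_iff₀ h1l]; nlinarith
    -- pointwise bound on each term
    have hterm : ∀ x, p x ^ ((1 : ℝ) / (1 - l)) ≤
        p x * (1 + t * Real.log (p x) + t ^ 2 * (Real.log (p x)) ^ 2 / 2) := by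
      intro x
      rcases eq_or_lt_of_le (hp0 x) with h | h
      · rw [← h, Real.zero_rpow (by positivity)]
        simp [← h]
      · have hlogle : Real.log (p x) ≤ 0 :=
          Real.log_nonpos (hp0 x) (by linarith [hpc x])
        have hz : t * Real.log (p x) ≤ 0 := mul_nonpos_of_nonneg_of_nonpos ht0 hlogle
        have hb := exp_le_one_add_add_sq hz
        have hrw : p x ^ ((1 : ℝ) / (1 - l)) = p x * Real.exp (t * Real.log (p x)) := by
          rw [hst, Real.rpow_add h, Real.rpow_one, Real.rpow_def_of_pos h,
            mul_comm (Real.log (p x)) t]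
        rw [hrw]
        have := mul_le_mul_of_nonneg_left hb (hp0 x)
        calc p x * Real.exp (t * Real.log (p x))
            ≤ p x * (1 + t * Real.log (p x) + (t * Real.log (p x)) ^ 2 / 2) := this
          _ = p x * (1 + t * Real.log (p x) + t ^ 2 * (Real.log (p x)) ^ 2 / 2) := by ring
    set E : ℝ := ∑ x, p x ^ ((1 : ℝ) / (1 - l)) with hE
    have hEpos : 0 < E := by
      have hx : ∃ x ∈ Finset.univ (α := 𝒳), 0 < p x ^ ((1 : ℝ) / (1 - l)) := by
        by_contra hcon
        push_neg at hcon
        have : ∀ x, p x = 0 := by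
          intro x
          by_contra hx0
          have hpx : 0 < p x := lt_of_le_of_ne (hp0 x) (Ne.symm hx0)
          exact absurd (Real.rpow_pos_of_pos hpx _)
            (not_lt.2 (hcon x (Finset.mem_univ x)))
        simp [this] at hp1
      exact Finset.sum_pos' (fun x _ => Real.rpow_nonneg (hp0 x) _) hx
    have hEB : E ≤ 1 + t * L + t ^ 2 / 2 * C := by
      have h1 : E ≤ ∑ x, p x * (1 + t * Real.log (p x) + t ^ 2 * (Real.log (p x)) ^ 2 / 2) :=
        Finset.sum_le_sum fun x _ => hterm x
      have h2 : (∑ x, p x * (1 + t * Real.log (p x) + t ^ 2 * (Real.log (p x)) ^ 2 / 2))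
          = (∑ x, p x) + t * L + t ^ 2 / 2 * (∑ x, p x * (Real.log (p x)) ^ 2) := by
        rw [hL, Finset.mul_sum, Finset.mul_sum, ← Finset.sum_add_distrib,
          ← Finset.sum_add_distrib]
        exact Finset.sum_congr rfl fun x _ => by ring
      have h3 : t ^ 2 / 2 * (∑ x, p x * (Real.log (p x)) ^ 2) ≤ t ^ 2 / 2 * C :=
        mul_le_mul_of_nonneg_left hpC (by positivity)
      rw [h2] at h1
      rw [hp1] at h1
      linarith
    have hBpos : 0 < 1 + t * L + t ^ 2 / 2 * C := lt_of_lt_of_le hEpos hEB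
    have hlogE : Real.log E ≤ t * L + t ^ 2 / 2 * C := by
      calc Real.log E ≤ Real.log (1 + t * L + t ^ 2 / 2 * C) :=
            Real.log_le_log hEpos hEB
        _ ≤ (1 + t * L + t ^ 2 / 2 * C) - 1 := Real.log_le_sub_one_of_pos hBpos
        _ = t * L + t ^ 2 / 2 * C := by ring
    have hpsile : psiFn p l ≤ 2 * C * l ^ 2 := by
      have : psiFn p l = l * Hnat p + (1 - l) * Real.log E := rfl
      rw [this, hHL]
      have h4 : (1 - l) * Real.log E ≤ (1 - l) * (t * L + t ^ 2 / 2 * C) :=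
        mul_le_mul_of_nonneg_left hlogE h1l.le
      have h5 : (1 - l) * (t * L + t ^ 2 / 2 * C) = l * L + (1 - l) * (t ^ 2 / 2 * C) := by
        rw [mul_add, ← mul_assoc, htl]
      have hA : (0:ℝ) ≤ t ^ 2 / 2 * C := by positivity
      have h6 : (1 - l) * (t ^ 2 / 2 * C) ≤ t ^ 2 / 2 * C := by
        nlinarith [mul_nonneg hl0 hA]
      have ht4 : t ^ 2 ≤ 4 * l ^ 2 := by nlinarith
      have h7 : t ^ 2 / 2 * C ≤ 2 * C * l ^ 2 := by
        have := mul_le_mul_of_nonneg_right ht4 hC.le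
        linarith
      nlinarith
    have hfinal : 2 * C * l ^ 2 ≤ Real.log (1 + 4 * (Real.exp (C / 2) - 1) * l ^ 2) :=
      two_C_sq_le_log hC hl0 hl2
    linarith
  · -- derivative at 0
    have hFsum : HasDerivAt (fun s : ℝ => ∑ x, p x ^ s) L 1 := by
      rw [hL]
      exact HasDerivAt.fun_sum fun x _ => hasDerivAt_rpow_exponent (hp0 x)
    have hne : (∑ x, p x ^ ((1:ℝ))) ≠ 0 := by rw [hF1]; norm_num
    have hlog : HasDerivAt (fun s : ℝ => Real.log (∑ x, p x ^ s)) L 1 := by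
      have := hFsum.log hne
      simpa only [hF1, div_one] using this
    have hs : HasDerivAt (fun l : ℝ => (1 : ℝ) / (1 - l)) 1 0 := by
      have hsub : HasDerivAt (fun l : ℝ => 1 - l) (-1) 0 := by
        exact (hasDerivAt_id' (0:ℝ)).const_sub 1
      have := (hasDerivAt_const 0 (1 : ℝ)).fun_div hsub (by norm_num)
      rw [show ((0:ℝ) * (1 - 0) - 1 * -1) / (1 - 0) ^ 2 = 1 by norm_num] at this
      exact this
    have h1 : HasDerivAt (fun s : ℝ => Real.log (∑ x, p x ^ s)) L
        ((fun l : ℝ => (1:ℝ)/(1-l)) 0) := by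
      rw [show ((fun l : ℝ => (1:ℝ)/(1-l)) 0) = 1 by norm_num]
      exact hlog
    have hcomp : HasDerivAt (fun l : ℝ => Real.log (∑ x, p x ^ ((1 : ℝ) / (1 - l))))
        (L * 1) 0 := by have := h1.comp 0 hs; exact this
    have hG0 : Real.log (∑ x, p x ^ ((1 : ℝ) / (1 - (0:ℝ)))) = 0 := by
      rw [show (1:ℝ)/(1-(0:ℝ)) = 1 by norm_num, hF1, Real.log_one]
    have hmul : HasDerivAt (fun l : ℝ =>
        (1 - l) * Real.log (∑ x, p x ^ ((1 : ℝ) / (1 - l))))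
        ((-1) * Real.log (∑ x, p x ^ ((1 : ℝ) / (1 - (0:ℝ)))) + (1 - 0) * (L * 1)) 0 := by
      have hsub : HasDerivAt (fun l : ℝ => 1 - l) (-1) 0 := by
        exact (hasDerivAt_id' (0:ℝ)).const_sub 1
      exact HasDerivAt.mul hsub hcomp
    have hlin : HasDerivAt (fun l : ℝ => l * Hnat p) (Hnat p) 0 := by
      simpa using (hasDerivAt_id (0 : ℝ)).mul_const (Hnat p)
    have := hlin.add hmul
    have heq : Hnat p + ((-1) * Real.log (∑ x, p x ^ ((1 : ℝ) / (1 - (0:ℝ)))) + (1 - 0) * (L * 1))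
        = 0 := by
      rw [hG0, hHL]; ring
    rw [heq] at this
    exact this
end
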